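/- Under the standing hypotheses (a continuous; b, c continuous nonnegative; τ > 0; b_j < 1; t_j ↑ ∞; l = min{τ,1}), if liminf_{t→∞} ∫_{t−l}^{t} (∏_{s−τ < t_j ≤ s}(1−b_j))·b(s)·exp(∫_{s−τ}^{s} a(u) du) ds > 1/e, then every solution of x'(t) + a(t)x(t) + b(t)x(t−τ) + c(t)x([t−1]) = 0 (t ≠ t_i), Δx(t_i) = b_i x(t_i), is oscillatory. -/

import Mathlib

/-!
Multiplying a positive solution by `∏_{t_j ≤ t}(1 - b_j) · e^{∫₀ᵗ a}` absorbs both the impulses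
and the term `a x`: the product `z` is continuous, eventually positive and satisfies the delay
inequality `z'(t) + P(t) z(t - τ) ≤ 0`, where `P` is the integrand of the criterion (the `c`-term
only helps); since `min τ 1 ≤ τ`, eventually `∫_{t-τ}^t P ≥ γ` for some `γ > 1/e`. For such an
inequality the ratio `R = z(t - τ)/z(t)` is frequently bounded (split a window of `P`-mass `≥ γ`
into two halves), and integrating `z' ≤ -ρ P z` whenever `R ≥ ρ` gives `r ≥ e^{γ r}` for
`r = liminf R`, which is impossible when `γ > 1/e`.
-/

open Set Filter Topology MeasureTheory

theorem le_of_hasDerivAt_nonpos_off_finite {f f' : ℝ → ℝ} {S : Set ℝ} (hS : S.Finite)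
    {u v : ℝ} (huv : u ≤ v) (hf : ContinuousOn f (Icc u v))
    (hf' : ∀ t ∈ Ioo u v, t ∉ S → HasDerivAt f (f' t) t)
    (hf'₀ : ∀ t ∈ Ioo u v, t ∉ S → f' t ≤ 0) : f v ≤ f u := by
  induction S, hS using Set.Finite.induction_on generalizing u v with
  | empty =>
    refine antitoneOn_of_hasDerivWithinAt_nonpos (convex_Icc u v) hf (f' := f') ?_ ?_
      (left_mem_Icc.2 huv) (right_mem_Icc.2 huv) huv
    · rw [interior_Icc]
      exact fun t ht => (hf' t ht (notMem_empty t)).hasDerivWithinAt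
    · rw [interior_Icc]
      exact fun t ht => hf'₀ t ht (notMem_empty t)
  | @insert a S _ _ ih =>
    by_cases ha : a ∈ Ioo u v
    · have hua : Ioo u a ⊆ Ioo u v := Ioo_subset_Ioo_right ha.2.le
      have hav : Ioo a v ⊆ Ioo u v := Ioo_subset_Ioo_left ha.1.le
      have hne_left : ∀ t ∈ Ioo u a, t ∉ S → t ∉ insert a S := fun t ht htS =>
        by rintro (rfl | h); exacts [ht.2.false, htS h]
      have hne_right : ∀ t ∈ Ioo a v, t ∉ S → t ∉ insert a S := fun t ht htS =>
        by rintro (rfl | h); exacts [ht.1.false, htS h]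
      calc f v ≤ f a := ih ha.2.le (hf.mono (Icc_subset_Icc_left ha.1.le))
              (fun t ht htS => hf' t (hav ht) (hne_right t ht htS))
              (fun t ht htS => hf'₀ t (hav ht) (hne_right t ht htS))
        _ ≤ f u := ih ha.1.le (hf.mono (Icc_subset_Icc_right ha.2.le))
              (fun t ht htS => hf' t (hua ht) (hne_left t ht htS))
              (fun t ht htS => hf'₀ t (hua ht) (hne_left t ht htS))
    · have hne : ∀ t ∈ Ioo u v, t ∉ S → t ∉ insert a S := fun t ht htS =>
        by rintro (rfl | h); exacts [ha ht, htS h]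
      exact ih huv hf (fun t ht htS => hf' t ht (hne t ht htS))
        (fun t ht htS => hf'₀ t ht (hne t ht htS))

theorem lt_exp_mul_of_inv_exp_lt {γ : ℝ} (hγ : 1 / Real.exp 1 < γ) (r : ℝ) :
    r < Real.exp (γ * r) := by
  rcases le_or_gt r 0 with hr | hr
  · exact hr.trans_lt (Real.exp_pos _)
  have hγe : 1 < Real.exp 1 * γ := by rwa [div_lt_iff₀' (Real.exp_pos 1)] at hγ
  calc r < Real.exp 1 * γ * r := lt_mul_of_one_lt_left hr hγe
    _ = Real.exp 1 * (γ * r - 1 + 1) := by ring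
    _ ≤ Real.exp 1 * Real.exp (γ * r - 1) := by gcongr; exact Real.add_one_le_exp _
    _ = Real.exp (γ * r) := by rw [← Real.exp_add]; ring_nf

section Finprod

variable {ι : Type*} {f : ι → ℝ}

theorem finprod_mem_pos {s : Set ι} (hf : ∀ j, 0 < f j) : 0 < ∏ᶠ j ∈ s, f j :=
  finprod_mem_induction (0 < ·) one_pos (fun _ _ => mul_pos) fun j _ => hf j

theorem finprod_mem_le_finprod_mem_max_one (hf : ∀ j, 0 ≤ f j) {s t : Set ι}
    (ht : t.Finite) (hst : s ⊆ t) : ∏ᶠ j ∈ s, f j ≤ ∏ᶠ j ∈ t, max 1 (f j) := by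
  have hs := ht.subset hst
  rw [finprod_mem_eq_finite_toFinset_prod _ hs, finprod_mem_eq_finite_toFinset_prod _ ht]
  calc ∏ j ∈ hs.toFinset, f j ≤ ∏ j ∈ hs.toFinset, max 1 (f j) :=
        Finset.prod_le_prod (fun j _ => hf j) fun j _ => le_max_right _ _
    _ ≤ ∏ j ∈ ht.toFinset, max 1 (f j) :=
        Finset.prod_le_prod_of_subset_of_one_le (Finite.toFinset_subset_toFinset.2 hst)
          (fun _ _ => zero_le_one.trans (le_max_left _ _)) fun _ _ _ => le_max_left _ _

end Finprod

section Integrability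

variable {P : ℝ → ℝ}

theorem aestronglyMeasurable_of_continuousAt_off_countable {f : ℝ → ℝ} {E : Set ℝ}
    (hE : E.Countable) (hf : ∀ t ∉ E, ContinuousAt f t) : AEStronglyMeasurable f volume := by
  have h := ContinuousOn.aestronglyMeasurable (μ := volume)
    (fun t ht => (hf t ht).continuousWithinAt) hE.measurableSet.compl
  rwa [Measure.restrict_eq_self_of_ae_mem (compl_mem_ae_iff.2 (hE.measure_zero volume))] at h

theorem locallyIntegrable_of_continuousAt_off_countable {f : ℝ → ℝ} {E : Set ℝ}
    (hE : E.Countable) (hf : ∀ t ∉ E, ContinuousAt f t)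
    (hbdd : ∀ a b, ∃ C, ∀ s ∈ Icc a b, ‖f s‖ ≤ C) : LocallyIntegrable f volume := fun t => by
  obtain ⟨C, hC⟩ := hbdd (t - 1) (t + 1)
  exact ⟨Icc (t - 1) (t + 1), Icc_mem_nhds (by linarith) (by linarith),
    Measure.integrableOn_of_bounded measure_Icc_lt_top.ne
      (aestronglyMeasurable_of_continuousAt_off_countable hE hf)
      ((ae_restrict_iff' measurableSet_Icc).2 (Eventually.of_forall hC))⟩

theorem MeasureTheory.LocallyIntegrable.intervalIntegrable (hP : LocallyIntegrable P) (a b : ℝ) :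
    IntervalIntegrable P volume a b :=
  (hP.integrableOn_isCompact isCompact_uIcc).intervalIntegrable

theorem MeasureTheory.LocallyIntegrable.hasDerivAt_primitive (hP : LocallyIntegrable P) (u : ℝ)
    {t : ℝ} (ht : ContinuousAt P t) : HasDerivAt (fun r => ∫ s in u..r, P s) (P t) t :=
  intervalIntegral.integral_hasDerivAt_right (hP.intervalIntegrable u t)
    hP.aestronglyMeasurable.stronglyMeasurableAtFilter ht

theorem eventually_le_integral_of_lt_liminf (hP : LocallyIntegrable P volume)
    (hP0 : ∀ t, 0 ≤ P t) {l τ L : ℝ} (hl : 0 ≤ l) (hlτ : l ≤ τ)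
    (hL : L < liminf (fun t => ∫ s in (t - l)..t, P s) atTop) :
    ∀ᶠ t in atTop, L ≤ ∫ s in (t - τ)..t, P s := by
  have hbdd : IsBoundedUnder (· ≥ ·) atTop fun t => ∫ s in (t - l)..t, P s :=
    isBoundedUnder_of_eventually_ge (Eventually.of_forall fun t =>
      intervalIntegral.integral_nonneg (by linarith) fun s _ => hP0 s)
  filter_upwards [eventually_lt_of_lt_liminf hL hbdd] with t ht
  exact ht.le.trans (intervalIntegral.integral_mono_interval (by linarith) (by linarith) le_rfl
    (Eventually.of_forall hP0) (hP.intervalIntegrable _ _))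

end Integrability

section DelayInequality

variable {P z z' : ℝ → ℝ} {τ T : ℝ} {E : Set ℝ}

structure IsDelayIneqSolution (P : ℝ → ℝ) (τ T : ℝ) (E : Set ℝ) (z z' : ℝ → ℝ) : Prop where
  finite_inter_Iic : ∀ v, (E ∩ Iic v).Finite
  locallyIntegrable : LocallyIntegrable P volume
  continuousAt : ∀ t ∉ E, ContinuousAt P t
  nonneg : ∀ t, 0 ≤ P t
  continuousOn : ContinuousOn z (Ici T)
  hasDerivAt : ∀ t, T < t → t ∉ E → HasDerivAt z (z' t) t
  deriv_le : ∀ t, T < t → t ∉ E → z' t ≤ -(P t * z (t - τ))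

namespace IsDelayIneqSolution

theorem add_integral_le (h : IsDelayIneqSolution P τ T E z z')
    {u v K : ℝ} (hu : T ≤ u) (huv : u ≤ v)
    (hK : ∀ s ∈ Icc u v, K ≤ z (s - τ)) : z v + K * ∫ s in u..v, P s ≤ z u := by
  have key := le_of_hasDerivAt_nonpos_off_finite (f := fun t => z t + K * ∫ s in u..t, P s)
    (f' := fun t => z' t + K * P t) (h.finite_inter_Iic v) huv
    ((h.continuousOn.mono (Icc_subset_Ici_iff huv |>.2 hu)).add
      ((intervalIntegral.continuous_primitive h.locallyIntegrable.intervalIntegrable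
        u).continuousOn.const_smul K))
    (fun t ht htE => (h.hasDerivAt t (hu.trans_lt ht.1) fun hE => htE ⟨hE, ht.2.le⟩).add
      ((h.locallyIntegrable.hasDerivAt_primitive u
        (h.continuousAt t fun hE => htE ⟨hE, ht.2.le⟩)).const_mul K))
    (fun t ht htE => by
      have hderiv := h.deriv_le t (hu.trans_lt ht.1) fun hE => htE ⟨hE, ht.2.le⟩
      have hKP := mul_le_mul_of_nonneg_left (hK t (Ioo_subset_Icc_self ht)) (h.nonneg t)
      linarith)
  simpa using key

theorem mul_exp_integral_le (h : IsDelayIneqSolution P τ T E z z')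
    {u v ρ : ℝ} (hu : T ≤ u) (huv : u ≤ v)
    (hρ : ∀ s ∈ Icc u v, ρ * z s ≤ z (s - τ)) :
    z v * Real.exp (ρ * ∫ s in u..v, P s) ≤ z u := by
  set I : ℝ → ℝ := fun r => ∫ s in u..r, P s
  have key := le_of_hasDerivAt_nonpos_off_finite (f := fun t => z t * Real.exp (ρ * I t))
    (f' := fun t => z' t * Real.exp (ρ * I t) + z t * (Real.exp (ρ * I t) * (ρ * P t)))
    (h.finite_inter_Iic v) huv
    ((h.continuousOn.mono (Icc_subset_Ici_iff huv |>.2 hu)).mul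
      (Real.continuous_exp.comp_continuousOn
        ((intervalIntegral.continuous_primitive h.locallyIntegrable.intervalIntegrable
          u).continuousOn.const_smul ρ)))
    (fun t ht htE => (h.hasDerivAt t (hu.trans_lt ht.1) fun hE => htE ⟨hE, ht.2.le⟩).mul
      ((h.locallyIntegrable.hasDerivAt_primitive u
        (h.continuousAt t fun hE => htE ⟨hE, ht.2.le⟩)).const_mul ρ).exp)
    (fun t ht htE => by
      have hderiv := h.deriv_le t (hu.trans_lt ht.1) fun hE => htE ⟨hE, ht.2.le⟩
      have hρP := mul_le_mul_of_nonneg_left (hρ t (Ioo_subset_Icc_self ht)) (h.nonneg t)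
      have hsum : z' t + P t * (ρ * z t) ≤ 0 := by linarith
      calc z' t * Real.exp (ρ * I t) + z t * (Real.exp (ρ * I t) * (ρ * P t))
          = Real.exp (ρ * I t) * (z' t + P t * (ρ * z t)) := by ring
        _ ≤ 0 := mul_nonpos_of_nonneg_of_nonpos (Real.exp_pos _).le hsum)
  simpa [I] using key

theorem antitoneOn (h : IsDelayIneqSolution P τ T E z z')
    (hτ : 0 ≤ τ) (hz : ∀ t, T ≤ t → 0 < z t) : AntitoneOn z (Ici (T + τ)) := by
  intro u hu v _ huv
  simpa using h.add_integral_le (K := 0) (by linarith [mem_Ici.1 hu]) huv fun s hs =>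
    (hz _ (by linarith [mem_Ici.1 hu, hs.1])).le

theorem exists_sq_mul_le (h : IsDelayIneqSolution P τ T E z z')
    (hτ : 0 ≤ τ) (hz : ∀ t, T ≤ t → 0 < z t) {γ t : ℝ} (hγ : 0 < γ)
    (ht : T + 3 * τ ≤ t) (hγt : γ ≤ ∫ s in (t - τ)..t, P s) :
    ∃ w ∈ Icc (t - τ) t, γ ^ 2 * z (w - τ) ≤ 4 * z w := by
  have hanti := h.antitoneOn hτ hz
  have hP := h.locallyIntegrable
  -- split the window `[t - τ, t]` at a point `w` carrying half of the mass of `P` on each side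
  obtain ⟨w, hw, hleft⟩ : ∃ w ∈ Icc (t - τ) t, ∫ s in (t - τ)..w, P s = γ / 2 :=
    intermediate_value_Icc (by linarith)
      (intervalIntegral.continuous_primitive hP.intervalIntegrable (t - τ)).continuousOn
      ⟨by simp; linarith, by linarith⟩
  have hright : γ / 2 ≤ ∫ s in w..t, P s := by
    rw [← intervalIntegral.integral_interval_sub_left (hP.intervalIntegrable _ _)
      (hP.intervalIntegrable _ _), hleft]
    linarith
  have hw_right : z t + z (t - τ) * ∫ s in w..t, P s ≤ z w :=
    h.add_integral_le (by linarith [hw.1]) hw.2 fun s hs =>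
      hanti (by simp; linarith [hw.1, hs.1]) (by simp; linarith) (by linarith [hs.2])
  have hw_left : z w + z (w - τ) * ∫ s in (t - τ)..w, P s ≤ z (t - τ) :=
    h.add_integral_le (by linarith) hw.1 fun s hs =>
      hanti (by simp; linarith [hs.1]) (by simp; linarith [hw.1]) (by linarith [hs.2])
  rw [hleft] at hw_left
  have hzt := hz t (by linarith)
  have hzw := hz w (by linarith [hw.1])
  have hhalf : γ / 2 * z (t - τ) ≤ z w := by
    nlinarith [mul_le_mul_of_nonneg_left hright (hz (t - τ) (by linarith)).le]
  exact ⟨w, hw, by nlinarith⟩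

theorem exp_mul_mul_le (h : IsDelayIneqSolution P τ T E z z') (hτ : 0 ≤ τ)
    (hz : ∀ t, T ≤ t → 0 < z t) {ρ γ T₁ t : ℝ} (hρ : 0 ≤ ρ) (hT₁ : T ≤ T₁)
    (hρz : ∀ s, T₁ ≤ s → ρ * z s ≤ z (s - τ)) (ht : T₁ + τ ≤ t)
    (hγt : γ ≤ ∫ s in (t - τ)..t, P s) : Real.exp (ρ * γ) * z t ≤ z (t - τ) :=
  calc Real.exp (ρ * γ) * z t ≤ Real.exp (ρ * ∫ s in (t - τ)..t, P s) * z t := by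
        gcongr
        exact (hz t (by linarith)).le
    _ ≤ z (t - τ) := by
        rw [mul_comm]
        exact h.mul_exp_integral_le (by linarith) (by linarith) fun s hs =>
          hρz s (by linarith [hs.1])

theorem not_forall_pos (h : IsDelayIneqSolution P τ T E z z')
    (hτ : 0 ≤ τ) {γ : ℝ} (hγ : 1 / Real.exp 1 < γ)
    (hγP : ∀ᶠ t in atTop, γ ≤ ∫ s in (t - τ)..t, P s) : ¬ ∀ t, T ≤ t → 0 < z t := by
  intro hz
  have hγ0 : 0 < γ := lt_trans (by positivity) hγ
  have hanti := h.antitoneOn hτ hz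
  set R : ℝ → ℝ := fun t => z (t - τ) / z t
  have hR1 : ∀ᶠ t in atTop, 1 ≤ R t := by
    filter_upwards [eventually_ge_atTop (T + 2 * τ)] with t ht
    exact (one_le_div (hz t (by linarith))).2
      (hanti (by simp; linarith) (by simp; linarith) (by linarith))
  have hRγ : ∃ᶠ t in atTop, R t ≤ 4 / γ ^ 2 := by
    refine frequently_atTop.2 fun t₀ => ?_
    obtain ⟨t, hγt, ht⟩ := (hγP.and (eventually_ge_atTop (max (t₀ + τ) (T + 3 * τ)))).exists
    obtain ⟨w, hw, hzw⟩ := h.exists_sq_mul_le hτ hz hγ0 (le_of_max_le_right ht) hγt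
    refine ⟨w, by linarith [le_of_max_le_left ht, hw.1], ?_⟩
    rw [div_le_div_iff₀ (hz w (by linarith [le_of_max_le_right ht, hw.1])) (by positivity)]
    linarith
  have hRexp : ∀ ρ, 0 ≤ ρ → (∀ᶠ t in atTop, ρ < R t) →
      ∀ᶠ t in atTop, Real.exp (ρ * γ) ≤ R t := by
    intro ρ hρ hρR
    obtain ⟨T₁, hT₁⟩ := eventually_atTop.1 (hρR.and (eventually_ge_atTop T))
    have hTT₁ : T ≤ T₁ := (hT₁ T₁ le_rfl).2
    filter_upwards [hγP, eventually_ge_atTop (T₁ + τ)] with t hγt ht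
    rw [le_div_iff₀ (hz t (by linarith))]
    exact h.exp_mul_mul_le hτ hz hρ hTT₁ (fun s hs =>
      ((lt_div_iff₀ (hz s (hTT₁.trans hs))).1 (hT₁ s hs).1).le) ht hγt
  have hRbdd : IsBoundedUnder (· ≥ ·) atTop R := isBoundedUnder_of_eventually_ge hR1
  have hRcobdd : IsCoboundedUnder (· ≥ ·) atTop R := IsCoboundedUnder.of_frequently_le hRγ
  set r := liminf R atTop
  have hr : 1 ≤ r := le_liminf_of_le hRcobdd hR1
  have hexp_le : ∀ᶠ ρ in 𝓝[<] r, Real.exp (ρ * γ) ≤ r := by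
    filter_upwards [Ioo_mem_nhdsLT (by linarith : (0 : ℝ) < r)] with ρ hρ
    exact le_liminf_of_le hRcobdd (hRexp ρ hρ.1.le (eventually_lt_of_lt_liminf hρ.2 hRbdd))
  have hlim : Real.exp (r * γ) ≤ r :=
    le_of_tendsto ((Real.continuous_exp.comp (continuous_mul_const γ)).tendsto r
      |>.mono_left nhdsWithin_le_nhds) hexp_le
  exact (lt_exp_mul_of_inv_exp_lt hγ r).not_ge (by rwa [mul_comm])

end IsDelayIneqSolution

end DelayInequality

section LocallyFinite

variable {ι : Type*} {u : ι → ℝ}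

theorem finite_setOf_le_of_tendsto_cofinite (hu : Tendsto u cofinite atTop) (t : ℝ) :
    {j | u j ≤ t}.Finite := by
  simpa using (hu.eventually_gt_atTop t)

theorem finite_range_inter_Iic_of_tendsto_cofinite (hu : Tendsto u cofinite atTop) (t : ℝ) :
    (range u ∩ Iic t).Finite :=
  ((finite_setOf_le_of_tendsto_cofinite hu t).image u).subset
    (by rintro _ ⟨⟨j, rfl⟩, hj⟩; exact ⟨j, hj, rfl⟩)

/-- Only the finitely many `j` with `u j ≤ t + 1` matter near `t`. -/
theorem eventually_setOf_le_eq (hu : Tendsto u cofinite atTop) {l : Filter ℝ} {t : ℝ}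
    (hl : l ≤ 𝓝 t) {p : ι → Prop} (hp : ∀ j, p j → u j ≤ t)
    (h : ∀ j, ∀ᶠ s in l, u j ≤ s ↔ p j) : ∀ᶠ s in l, {j | u j ≤ s} = {j | p j} := by
  have hnear : ∀ᶠ s in l, ∀ j ∈ {j | u j ≤ t + 1}, u j ≤ s ↔ p j :=
    (finite_setOf_le_of_tendsto_cofinite hu (t + 1)).eventually_all.2 fun j _ => h j
  filter_upwards [hnear, hl (Iio_mem_nhds (lt_add_one t))] with s hnear hs
  ext j
  by_cases hj : u j ≤ t + 1
  · exact hnear j hj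
  · have hst : s < u j := (mem_Iio.1 hs).trans (not_le.1 hj)
    exact iff_of_false hst.not_ge fun hpj => hj ((hp j hpj).trans (by linarith))

theorem eventually_setOf_le_eq_nhds (hu : Tendsto u cofinite atTop) {t : ℝ} (ht : t ∉ range u) :
    ∀ᶠ s in 𝓝 t, {j | u j ≤ s} = {j | u j ≤ t} :=
  eventually_setOf_le_eq hu le_rfl (fun _ => id) fun j => by
    rcases lt_or_gt_of_ne fun h => ht ⟨j, h⟩ with hj | hj
    · filter_upwards [lt_mem_nhds hj] with s hs using iff_of_true hs.le hj.le
    · filter_upwards [gt_mem_nhds hj] with s hs using iff_of_false hs.not_ge hj.not_ge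

theorem eventually_setOf_le_eq_nhdsGE (hu : Tendsto u cofinite atTop) (t : ℝ) :
    ∀ᶠ s in 𝓝[≥] t, {j | u j ≤ s} = {j | u j ≤ t} :=
  eventually_setOf_le_eq hu nhdsWithin_le_nhds (fun _ => id) fun j => by
    rcases le_or_gt (u j) t with hj | hj
    · filter_upwards [self_mem_nhdsWithin] with s hs using iff_of_true (hj.trans hs) hj
    · filter_upwards [nhdsWithin_le_nhds (gt_mem_nhds hj)] with s hs
        using iff_of_false hs.not_ge hj.not_ge

theorem eventually_setOf_le_eq_nhdsLT (hu : Tendsto u cofinite atTop) (t : ℝ) :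
    ∀ᶠ s in 𝓝[<] t, {j | u j ≤ s} = {j | u j < t} :=
  eventually_setOf_le_eq hu nhdsWithin_le_nhds (fun _ => le_of_lt) fun j => by
    rcases lt_or_ge (u j) t with hj | hj
    · filter_upwards [nhdsWithin_le_nhds (lt_mem_nhds hj)] with s hs using iff_of_true hs.le hj
    · filter_upwards [self_mem_nhdsWithin] with s hs
        using iff_of_false (fun h => (h.trans_lt hs).not_ge hj) hj.not_gt

end LocallyFinite

section CumulativeProd

variable {ι M : Type*} [CommMonoid M] {u : ι → ℝ}

noncomputable def cumulativeProd (u : ι → ℝ) (f : ι → M) (t : ℝ) : M :=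
  ∏ᶠ j ∈ {j | u j ≤ t}, f j

theorem cumulativeProd_mul_prod_window (hu : Tendsto u cofinite atTop) (f : ι → M) {r s : ℝ}
    (hrs : r ≤ s) :
    cumulativeProd u f r * ∏ᶠ j ∈ {j | r < u j ∧ u j ≤ s}, f j = cumulativeProd u f s := by
  have hsplit : {j | u j ≤ s} = {j | u j ≤ r} ∪ {j | r < u j ∧ u j ≤ s} := by
    ext j
    by_cases hr : u j ≤ r
    · simp [hr, hr.trans hrs]
    · simp [hr, not_le.1 hr]
  rw [cumulativeProd, cumulativeProd, hsplit]
  exact (finprod_mem_union (s := {j | u j ≤ r}) (t := {j | r < u j ∧ u j ≤ s})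
    (disjoint_left.2 fun j h1 h2 => not_le.2 h2.1 h1) (finite_setOf_le_of_tendsto_cofinite hu r)
    ((finite_setOf_le_of_tendsto_cofinite hu s).subset fun j h => h.2)).symm

theorem cumulativeProd_eventuallyEq_nhds (hu : Tendsto u cofinite atTop) (f : ι → M) {t : ℝ}
    (ht : t ∉ range u) : cumulativeProd u f =ᶠ[𝓝 t] fun _ => cumulativeProd u f t := by
  filter_upwards [eventually_setOf_le_eq_nhds hu ht] with s hs
  exact congrArg (fun S : Set ι => ∏ᶠ j ∈ S, f j) hs

theorem cumulativeProd_eventuallyEq_nhdsGE (hu : Tendsto u cofinite atTop) (f : ι → M) (t : ℝ) :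
    cumulativeProd u f =ᶠ[𝓝[≥] t] fun _ => cumulativeProd u f t := by
  filter_upwards [eventually_setOf_le_eq_nhdsGE hu t] with s hs
  exact congrArg (fun S : Set ι => ∏ᶠ j ∈ S, f j) hs

theorem cumulativeProd_eventuallyEq_nhdsLT (hu : Tendsto u cofinite atTop) (f : ι → M) (t : ℝ) :
    cumulativeProd u f =ᶠ[𝓝[<] t] fun _ => ∏ᶠ j ∈ {j | u j < t}, f j := by
  filter_upwards [eventually_setOf_le_eq_nhdsLT hu t] with s hs
  exact congrArg (fun S : Set ι => ∏ᶠ j ∈ S, f j) hs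

theorem cumulativeProd_apply_eq_mul (hu : Tendsto u cofinite atTop) (hinj : Function.Injective u)
    (f : ι → M) (i : ι) :
    cumulativeProd u f (u i) = f i * ∏ᶠ j ∈ {j | u j < u i}, f j := by
  have hins : {j | u j ≤ u i} = insert i {j | u j < u i} := by
    ext j
    simp [le_iff_lt_or_eq, hinj.eq_iff, or_comm]
  rw [cumulativeProd, hins, finprod_mem_insert (s := {j | u j < u i}) _ (lt_irrefl (u i))
    ((finite_setOf_le_of_tendsto_cofinite hu (u i)).subset fun _ h => le_of_lt (α := ℝ) h)]

end CumulativeProd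

section CumulativeProdReal

variable {ι : Type*} {u : ι → ℝ}

theorem hasDerivAt_mul_cumulativeProd (hu : Tendsto u cofinite atTop) (f : ι → ℝ)
    {x : ℝ → ℝ} {x' t : ℝ} (ht : t ∉ range u) (hx : HasDerivAt x x' t) :
    HasDerivAt (fun s => x s * cumulativeProd u f s) (x' * cumulativeProd u f t) t :=
  (hx.mul_const _).congr_of_eventuallyEq
    ((cumulativeProd_eventuallyEq_nhds hu f ht).mono fun s hs => by simp only [hs])

theorem continuousAt_mul_cumulativeProd (hu : Tendsto u cofinite atTop)
    (hinj : Function.Injective u) {f : ι → ℝ} {x : ℝ → ℝ} {t : ℝ}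
    (hx : t ∉ range u → ContinuousAt x t) (hrc : ∀ i, ContinuousWithinAt x (Ici (u i)) (u i))
    (hjump : ∀ i, Tendsto x (𝓝[<] u i) (𝓝 (f i * x (u i)))) :
    ContinuousAt (fun s => x s * cumulativeProd u f s) t := by
  by_cases ht : t ∈ range u
  · obtain ⟨i, rfl⟩ := ht
    rw [ContinuousAt, ← nhdsLT_sup_nhdsGE, tendsto_sup]
    constructor
    · have hlim : Tendsto (fun s => x s * ∏ᶠ j ∈ {j | u j < u i}, f j) (𝓝[<] u i)
          (𝓝 (x (u i) * cumulativeProd u f (u i))) := by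
        rw [cumulativeProd_apply_eq_mul hu hinj, ← mul_assoc, mul_comm (x _)]
        exact (hjump i).mul_const _
      exact hlim.congr' ((cumulativeProd_eventuallyEq_nhdsLT hu f (u i)).mono fun s hs => by
        simp only [hs])
    · exact ((hrc i).mul_const _).congr' ((cumulativeProd_eventuallyEq_nhdsGE hu f (u i)).mono
        fun s hs => by simp only [hs])
  · exact ((hx ht).mul (continuousAt_const (y := cumulativeProd u f t))).congr
      ((cumulativeProd_eventuallyEq_nhds hu f ht).mono fun s hs => by
        simp only [hs, Pi.mul_apply])

end CumulativeProdReal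

section Window

variable {ι : Type*} {u : ι → ℝ} {τ : ℝ}

theorem eventually_window_eq_nhds (hu : Tendsto u cofinite atTop) {t : ℝ}
    (ht : t ∉ range u) (htτ : t - τ ∉ range u) :
    ∀ᶠ s in 𝓝 t, {j | s - τ < u j ∧ u j ≤ s} = {j | t - τ < u j ∧ u j ≤ t} := by
  have hwindow : ∀ r, {j | r - τ < u j ∧ u j ≤ r} = {j | u j ≤ r} \ {j | u j ≤ r - τ} := by
    intro r; ext j; simp [and_comm]
  filter_upwards [eventually_setOf_le_eq_nhds hu ht,
    (tendsto_id (x := 𝓝 t)).sub_const τ |>.eventually (eventually_setOf_le_eq_nhds hu htτ)]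
    with s hs hsτ
  rw [hwindow, hwindow, hs, ← id_eq s, hsτ]

theorem continuousAt_prod_window (hu : Tendsto u cofinite atTop) (f : ι → ℝ) {t : ℝ}
    (ht : t ∉ range u) (htτ : t - τ ∉ range u) :
    ContinuousAt (fun s => ∏ᶠ j ∈ {j | s - τ < u j ∧ u j ≤ s}, f j) t :=
  continuousAt_const.congr ((eventually_window_eq_nhds hu ht htτ).mono fun _ hs =>
    congrArg (fun S : Set ι => ∏ᶠ j ∈ S, f j) hs.symm)

theorem locallyIntegrable_prod_window [Countable ι] (hu : Tendsto u cofinite atTop)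
    {f : ι → ℝ} (hf : ∀ j, 0 < f j) :
    LocallyIntegrable (fun s => ∏ᶠ j ∈ {j | s - τ < u j ∧ u j ≤ s}, f j) volume := by
  refine locallyIntegrable_of_continuousAt_off_countable
    ((countable_range u).union (countable_range fun j => u j + τ))
    (fun t ht => continuousAt_prod_window hu f (fun h => ht (Or.inl h))
      fun ⟨j, hj⟩ => ht (Or.inr ⟨j, by simp only [hj]; ring⟩))
    fun a b => ⟨∏ᶠ j ∈ {j | u j ≤ b}, max 1 (f j), fun s hs => ?_⟩
  rw [Real.norm_of_nonneg (finprod_mem_pos hf).le]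
  exact finprod_mem_le_finprod_mem_max_one (fun j => (hf j).le)
    (finite_setOf_le_of_tendsto_cofinite hu b) fun j hj => hj.2.trans hs.2

end Window

section ImpulsiveEquation

variable {a b c : ℝ → ℝ} {τ : ℝ} {bi ti : ℕ → ℝ} {x : ℝ → ℝ}

structure IsImpulsiveSolution (a b c : ℝ → ℝ) (τ : ℝ) (bi ti : ℕ → ℝ) (x : ℝ → ℝ) : Prop where
  hasDerivAt : ∀ t, 0 < t → (∀ i, t ≠ ti i) →
    HasDerivAt x (-(a t * x t + b t * x (t - τ) + c t * x ((⌊t - 1⌋ : ℤ) : ℝ))) t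
  continuousWithinAt_Ici : ∀ i, ContinuousWithinAt x (Ici (ti i)) (ti i)
  tendsto_nhdsLT : ∀ i, Tendsto x (𝓝[<] ti i) (𝓝 ((1 - bi i) * x (ti i)))

theorem IsImpulsiveSolution.neg (hx : IsImpulsiveSolution a b c τ bi ti x) :
    IsImpulsiveSolution a b c τ bi ti (fun t => -x t) where
  hasDerivAt t ht hti := (hx.hasDerivAt t ht hti).neg.congr_deriv (by ring)
  continuousWithinAt_Ici i := (hx.continuousWithinAt_Ici i).neg
  tendsto_nhdsLT i := by
    convert (hx.tendsto_nhdsLT i).neg using 2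
    ring

noncomputable def delayCoeff (a b : ℝ → ℝ) (τ : ℝ) (bi ti : ℕ → ℝ) (s : ℝ) : ℝ :=
  (∏ᶠ j ∈ {j : ℕ | s - τ < ti j ∧ ti j ≤ s}, (1 - bi j)) * b s *
    Real.exp (∫ u in (s - τ)..s, a u)

theorem delayCoeff_nonneg (hbnn : ∀ t, 0 ≤ b t) (hbi : ∀ i, bi i < 1) (s : ℝ) :
    0 ≤ delayCoeff a b τ bi ti s :=
  mul_nonneg (mul_nonneg (finprod_mem_pos fun j => sub_pos.2 (hbi j)).le (hbnn s))
    (Real.exp_pos _).le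

theorem continuous_integral_window (ha : Continuous a) (τ : ℝ) :
    Continuous fun s => ∫ u in (s - τ)..s, a u := by
  have hwindow : (fun s => ∫ u in (s - τ)..s, a u) =
      fun s => (∫ u in (0 : ℝ)..s, a u) - ∫ u in (0 : ℝ)..(s - τ), a u :=
    funext fun s => (intervalIntegral.integral_interval_sub_left
      (ha.intervalIntegrable _ _) (ha.intervalIntegrable _ _)).symm
  rw [hwindow]
  have hA := intervalIntegral.continuous_primitive (μ := volume)
    (fun p q => ha.intervalIntegrable p q) 0
  exact hA.sub (hA.comp (continuous_sub_right τ))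

theorem delayCoeff_continuousAt (ha : Continuous a) (hb : Continuous b)
    (hti : Tendsto ti cofinite atTop) {t : ℝ} (ht : t ∉ range ti)
    (htτ : t ∉ range fun j => ti j + τ) : ContinuousAt (delayCoeff a b τ bi ti) t :=
  ((continuousAt_prod_window hti _ ht fun ⟨j, hj⟩ => htτ ⟨j, by simp only [hj]; ring⟩).mul
    hb.continuousAt).mul ((continuous_integral_window ha τ).rexp.continuousAt)

theorem delayCoeff_locallyIntegrable (ha : Continuous a) (hb : Continuous b)
    (hbi : ∀ i, bi i < 1) (hti : Tendsto ti cofinite atTop) :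
    LocallyIntegrable (delayCoeff a b τ bi ti) volume :=
  ((locallyIntegrable_prod_window (τ := τ) hti fun j => sub_pos.2 (hbi j)).mul_continuous
    hb).mul_continuous
    (continuous_integral_window ha τ).rexp

theorem delayCoeff_mul_eq (ha : Continuous a) (hτ : 0 ≤ τ) (hti : Tendsto ti cofinite atTop)
    (s : ℝ) :
    delayCoeff a b τ bi ti s * (cumulativeProd ti (fun j => 1 - bi j) (s - τ) *
        Real.exp (∫ u in (0 : ℝ)..(s - τ), a u)) =
      b s * (cumulativeProd ti (fun j => 1 - bi j) s * Real.exp (∫ u in (0 : ℝ)..s, a u)) := by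
  rw [← cumulativeProd_mul_prod_window hti _ (sub_le_self s hτ),
    ← intervalIntegral.integral_add_adjacent_intervals (ha.intervalIntegrable 0 (s - τ))
      (ha.intervalIntegrable (s - τ) s), Real.exp_add, delayCoeff]
  ring

noncomputable def impulseTransform (a : ℝ → ℝ) (bi ti : ℕ → ℝ) (x : ℝ → ℝ) (t : ℝ) : ℝ :=
  x t * cumulativeProd ti (fun j => 1 - bi j) t * Real.exp (∫ u in (0 : ℝ)..t, a u)

theorem IsImpulsiveSolution.isDelayIneqSolution (hx : IsImpulsiveSolution a b c τ bi ti x)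
    (ha : Continuous a) (hb : Continuous b) (hbnn : ∀ t, 0 ≤ b t) (hcnn : ∀ t, 0 ≤ c t)
    (hτ : 0 ≤ τ) (hbi : ∀ i, bi i < 1) (hinj : Function.Injective ti)
    (hti : Tendsto ti cofinite atTop) {T : ℝ} (hT : ∀ t, T < t → 0 < x t) :
    IsDelayIneqSolution (delayCoeff a b τ bi ti) τ (max T 0 + 2) (range ti ∪ range (ti · + τ))
      (impulseTransform a bi ti x) fun t => -(b t * x (t - τ) + c t * x ((⌊t - 1⌋ : ℤ) : ℝ)) *
        cumulativeProd ti (fun j => 1 - bi j) t * Real.exp (∫ u in (0 : ℝ)..t, a u) := by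
  set Q := cumulativeProd ti fun j => 1 - bi j
  have hQ : ∀ t, 0 < Q t := fun t => finprod_mem_pos fun j => sub_pos.2 (hbi j)
  set A : ℝ → ℝ := fun t => ∫ u in (0 : ℝ)..t, a u
  have hA : ∀ t, HasDerivAt A (a t) t := fun t => (ha.integral_hasStrictDerivAt 0 t).hasDerivAt
  have hpos : ∀ t, max T 0 + 2 ≤ t → 0 < t := fun t ht => by linarith [le_max_right T 0]
  refine
    { finite_inter_Iic := fun v => ?_
      locallyIntegrable := delayCoeff_locallyIntegrable ha hb hbi hti
      continuousAt := fun t ht =>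
        delayCoeff_continuousAt ha hb hti (fun h => ht (Or.inl h)) fun h => ht (Or.inr h)
      nonneg := delayCoeff_nonneg hbnn hbi
      continuousOn := fun t ht => ((continuousAt_mul_cumulativeProd hti hinj
        (fun h => (hx.hasDerivAt t (hpos t ht) fun i hi => h ⟨i, hi.symm⟩).continuousAt)
        hx.continuousWithinAt_Ici hx.tendsto_nhdsLT).mul
          (hA t).continuousAt.rexp).continuousWithinAt
      hasDerivAt := fun t ht htE => ((hasDerivAt_mul_cumulativeProd hti _
        (fun h => htE (Or.inl h))
        (hx.hasDerivAt t (hpos t ht.le) fun i hi => htE (Or.inl ⟨i, hi.symm⟩))).mul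
          (hA t).exp).congr_deriv (by ring)
      deriv_le := fun t ht _ => ?_ }
  · rw [union_inter_distrib_right]
    exact (finite_range_inter_Iic_of_tendsto_cofinite hti v).union
      (finite_range_inter_Iic_of_tendsto_cofinite (tendsto_atTop_add_const_right _ τ hti) v)
  · -- `⌊t - 1⌋ > t - 2 > T`, so the `c`-term has the right sign
    have hfloor : 0 ≤ c t * x ((⌊t - 1⌋ : ℤ) : ℝ) := mul_nonneg (hcnn t)
      (hT _ (by linarith [Int.sub_one_lt_floor (t - 1), le_max_left T 0])).le
    have hcterm := mul_nonneg hfloor (mul_pos (hQ t) (Real.exp_pos (A t))).le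
    rw [impulseTransform]
    linear_combination hcterm + x (t - τ) * delayCoeff_mul_eq (b := b) (bi := bi) ha hτ hti t

theorem IsImpulsiveSolution.not_eventually_pos (hx : IsImpulsiveSolution a b c τ bi ti x)
    (ha : Continuous a) (hb : Continuous b) (hbnn : ∀ t, 0 ≤ b t) (hcnn : ∀ t, 0 ≤ c t)
    (hτ : 0 < τ) (hbi : ∀ i, bi i < 1) (hti : StrictMono ti) (htiTop : Tendsto ti atTop atTop)
    (hcrit : 1 / Real.exp 1 < liminf (fun t => ∫ s in (t - min τ 1)..t, delayCoeff a b τ bi ti s)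
      atTop) :
    ¬ ∃ T, ∀ t, T < t → 0 < x t := by
  rintro ⟨T, hT⟩
  have hu : Tendsto ti cofinite atTop := Nat.cofinite_eq_atTop ▸ htiTop
  obtain ⟨γ, hγ, hγP⟩ := exists_between hcrit
  refine (hx.isDelayIneqSolution ha hb hbnn hcnn hτ.le hbi hti.injective hu hT).not_forall_pos
    hτ.le hγ (eventually_le_integral_of_lt_liminf (delayCoeff_locallyIntegrable ha hb hbi hu)
      (delayCoeff_nonneg hbnn hbi) (by positivity) (min_le_left _ _) hγP) fun t ht => ?_
  exact mul_pos (mul_pos (hT t (by linarith [le_max_left T 0]))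
    (finprod_mem_pos fun j => sub_pos.2 (hbi j))) (Real.exp_pos _)

end ImpulsiveEquation

theorem oscillation_liminf_criterion_general
    (a b c : ℝ → ℝ) (ha : Continuous a) (hb : Continuous b)
    (hbnn : ∀ t, 0 ≤ b t) (hcnn : ∀ t, 0 ≤ c t)
    (τ : ℝ) (hτ : 0 < τ)
    (bi : ℕ → ℝ) (hbi : ∀ i, bi i < 1)
    (ti : ℕ → ℝ) (hti : StrictMono ti)
    (htiTop : Tendsto ti atTop atTop)
    (hcrit : 1 / Real.exp 1 < Filter.liminf (fun t => ∫ s in (t - min τ 1)..t,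
      (∏ᶠ j ∈ {j : ℕ | s - τ < ti j ∧ ti j ≤ s}, (1 - bi j)) * b s *
        Real.exp (∫ u in (s - τ)..s, a u)) Filter.atTop)
    (x : ℝ → ℝ)
    (hsol : ∀ t, 0 < t → (∀ i, t ≠ ti i) →
      HasDerivAt x (-(a t * x t + b t * x (t - τ) + c t * x ((⌊t - 1⌋ : ℤ) : ℝ))) t)
    (hrc : ∀ i, ContinuousWithinAt x (Set.Ici (ti i)) (ti i))
    (himp : ∀ i, Tendsto x (nhdsWithin (ti i) (Set.Iio (ti i)))
      (nhds ((1 - bi i) * x (ti i)))) :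
    (¬ ∃ T, ∀ t, T < t → 0 < x t) ∧ (¬ ∃ T, ∀ t, T < t → x t < 0) := by
  have hx : IsImpulsiveSolution a b c τ bi ti x := ⟨hsol, hrc, himp⟩
  refine ⟨hx.not_eventually_pos ha hb hbnn hcnn hτ hbi hti htiTop hcrit, ?_⟩
  rintro ⟨T, hT⟩
  exact hx.neg.not_eventually_pos ha hb hbnn hcnn hτ hbi hti htiTop hcrit
    ⟨T, fun t ht => neg_pos.2 (hT t ht)⟩

/-- Theorem 3 (first condition): with `l = min{τ,1}`, if
`liminf_{t→∞} ∫_{t-l}^{t} (∏_{s-τ < t_j ≤ s}(1-b_j)) b(s) exp(∫_{s-τ}^{s} a) ds > 1/e`,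
then every solution of `x'(t) + a(t)x(t) + b(t)x(t-τ) + c(t)x(⌊t-1⌋) = 0` (`t ≠ t_i`),
`Δx(t_i) = b_i x(t_i)`, is oscillatory. -/
theorem oscillation_liminf_criterion
    (a b c : ℝ → ℝ) (ha : Continuous a) (hb : Continuous b) (hc : Continuous c)
    (hbnn : ∀ t, 0 ≤ b t) (hcnn : ∀ t, 0 ≤ c t)
    (τ : ℝ) (hτ : 0 < τ)
    (bi : ℕ → ℝ) (hbi : ∀ i, bi i < 1)
    (ti : ℕ → ℝ) (hti : StrictMono ti) (hti0 : 0 < ti 0)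
    (htiTop : Tendsto ti atTop atTop)
    (hcrit : 1 / Real.exp 1 < Filter.liminf (fun t => ∫ s in (t - min τ 1)..t,
      (∏ᶠ j ∈ {j : ℕ | s - τ < ti j ∧ ti j ≤ s}, (1 - bi j)) * b s *
        Real.exp (∫ u in (s - τ)..s, a u)) Filter.atTop)
    (x : ℝ → ℝ)
    (hsol : ∀ t, 0 < t → (∀ i, t ≠ ti i) →
      HasDerivAt x (-(a t * x t + b t * x (t - τ) + c t * x ((⌊t - 1⌋ : ℤ) : ℝ))) t)
    (hrc : ∀ i, ContinuousWithinAt x (Set.Ici (ti i)) (ti i))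
    (himp : ∀ i, Tendsto x (nhdsWithin (ti i) (Set.Iio (ti i)))
      (nhds ((1 - bi i) * x (ti i)))) :
    (¬ ∃ T, ∀ t, T < t → 0 < x t) ∧ (¬ ∃ T, ∀ t, T < t → x t < 0) :=
  oscillation_liminf_criterion_general a b c ha hb hbnn hcnn τ hτ bi hbi ti hti htiTop hcrit x hsol
    hrc himp
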